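/- For every g in H¹((ε, δ)) with 0 < ε small enough and fixed δ > 0, one has |g(ε)|² ≤ C |log ε| ( ∫_ε^δ x |g'(x)|² dx + ∫_{δ/2}^δ |g(x)|² dx ), where C depends only on δ and not on ε or g. -/

import Mathlib

/-!
Pick a point `y ∈ [δ/2, δ]` where `g²` is at most its mean over `[δ/2, δ]`, and write
`g ε = g y - ∫_ε^y g'`. The integral is bounded by a weighted Cauchy–Schwarz inequality,
`(∫_ε^y |g'|)² ≤ (∫_ε^y dx/x) (∫_ε^y x g'²) = log (y/ε) ∫_ε^y x g'²`, which is obtained by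
integrating the AM–GM bound `2|g'| ≤ s/x + x g'²/s` and optimising over `s > 0`.
For small `ε`, `log (δ/ε) ≤ 2 |log ε|` and `1 ≤ |log ε|`.
-/

open MeasureTheory Set

theorem two_mul_abs_le_mul_inv_add_mul_sq_div {x s : ℝ} (hx : 0 < x) (hs : 0 < s) (y : ℝ) :
    2 * |y| ≤ s * x⁻¹ + x * y ^ 2 / s := by
  rw [← div_eq_mul_inv, div_add_div _ _ hx.ne' hs.ne', le_div_iff₀ (by positivity)]
  have := sq_nonneg (s - x * |y|)
  rw [sub_sq, mul_pow, sq_abs] at this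
  linarith

theorem sq_le_mul_of_forall_two_mul_le {T L A : ℝ} (hT : 0 ≤ T) (hL : 0 < L) (hA : 0 ≤ A)
    (h : ∀ s > 0, 2 * T ≤ s * L + A / s) : T ^ 2 ≤ L * A := by
  rcases hT.eq_or_lt with rfl | hT
  · simpa using mul_nonneg hL.le hA
  have := h (T / L) (by positivity)
  rw [div_mul_cancel₀ _ hL.ne', div_div_eq_mul_div] at this
  have hTle : T ≤ A * L / T := by linarith
  rw [le_div_iff₀ hT] at hTle
  linarith

theorem intervalIntegrable_inv_of_pos {a b : ℝ} (ha : 0 < a) (hb : 0 < b) :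
    IntervalIntegrable (fun x : ℝ => x⁻¹) volume a b :=
  intervalIntegral.intervalIntegrable_inv (fun _ hx => ((lt_min ha hb).trans_le hx.1).ne')
    continuousOn_id

section
variable {f : ℝ → ℝ} {a b : ℝ}

theorem IntervalIntegrable.of_mul_sq (ha : 0 < a) (hab : a ≤ b)
    (hf : AEStronglyMeasurable f (volume.restrict (Ioc a b)))
    (h : IntervalIntegrable (fun x => x * f x ^ 2) volume a b) :
    IntervalIntegrable f volume a b := by
  have hinv := intervalIntegrable_inv_of_pos ha (ha.trans_le hab)
  rw [intervalIntegrable_iff_integrableOn_Ioc_of_le hab] at h hinv ⊢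
  refine (hinv.add h).div_const 2 |>.mono' hf ?_
  filter_upwards [ae_restrict_mem measurableSet_Ioc] with x hx
  have := two_mul_abs_le_mul_inv_add_mul_sq_div (ha.trans hx.1) one_pos (f x)
  rw [Real.norm_eq_abs]
  simp only [one_mul, div_one] at this
  simp only [Pi.add_apply]
  linarith

theorem two_mul_integral_abs_le_log_add (ha : 0 < a) (hab : a ≤ b)
    (hf : IntervalIntegrable f volume a b)
    (h : IntervalIntegrable (fun x => x * f x ^ 2) volume a b) {s : ℝ} (hs : 0 < s) :
    2 * ∫ x in a..b, |f x| ≤ s * Real.log (b / a) + (∫ x in a..b, x * f x ^ 2) / s := by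
  have hinv := intervalIntegrable_inv_of_pos ha (ha.trans_le hab)
  calc 2 * ∫ x in a..b, |f x| = ∫ x in a..b, 2 * |f x| :=
        (intervalIntegral.integral_const_mul _ _).symm
    _ ≤ ∫ x in a..b, (s * x⁻¹ + x * f x ^ 2 / s) :=
      intervalIntegral.integral_mono_on hab (hf.abs.const_mul 2)
        ((hinv.const_mul s).add (h.div_const s)) fun x hx =>
          two_mul_abs_le_mul_inv_add_mul_sq_div (ha.trans_le hx.1) hs (f x)
    _ = _ := by
      rw [intervalIntegral.integral_add (hinv.const_mul s) (h.div_const s),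
        intervalIntegral.integral_const_mul, intervalIntegral.integral_div,
        integral_inv_of_pos ha (ha.trans_le hab)]

theorem sq_intervalIntegral_le_log_mul (ha : 0 < a) (hab : a ≤ b)
    (hf : IntervalIntegrable f volume a b)
    (h : IntervalIntegrable (fun x => x * f x ^ 2) volume a b) :
    (∫ x in a..b, f x) ^ 2 ≤ Real.log (b / a) * ∫ x in a..b, x * f x ^ 2 := by
  rcases hab.eq_or_lt with rfl | hab'
  · simp
  calc (∫ x in a..b, f x) ^ 2 = |∫ x in a..b, f x| ^ 2 := (sq_abs _).symm
    _ ≤ (∫ x in a..b, |f x|) ^ 2 :=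
      pow_le_pow_left₀ (abs_nonneg _) (intervalIntegral.abs_integral_le_integral_abs hab) 2
    _ ≤ _ := sq_le_mul_of_forall_two_mul_le
        (intervalIntegral.integral_nonneg hab fun _ _ => abs_nonneg _)
        (Real.log_pos ((one_lt_div ha).2 hab'))
        (intervalIntegral.integral_nonneg hab fun x hx =>
          mul_nonneg (ha.le.trans hx.1) (sq_nonneg _))
        fun s hs => two_mul_integral_abs_le_log_add ha hab hf h hs

end

theorem exists_sub_mul_le_intervalIntegral {f : ℝ → ℝ} {c d : ℝ} (hcd : c ≤ d)
    (hf : ContinuousOn f (Icc c d)) : ∃ y ∈ Icc c d, (d - c) * f y ≤ ∫ x in c..d, f x := by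
  obtain ⟨y, hy, hmin⟩ := isCompact_Icc.exists_isMinOn (nonempty_Icc.2 hcd) hf
  refine ⟨y, hy, ?_⟩
  simpa using intervalIntegral.integral_mono_on hcd (intervalIntegrable_const (μ := volume))
    (hf.intervalIntegrable_of_Icc hcd) fun x hx => hmin hx

theorem sq_le_integral_sq_add_log_mul_integral_mul_sq_deriv {g g' : ℝ → ℝ} {a c d : ℝ}
    (ha : 0 < a) (hac : a ≤ c) (hcd : c < d)
    (hg : ∀ x ∈ Icc a d, HasDerivAt g (g' x) x)
    (hg' : IntervalIntegrable (fun x => x * g' x ^ 2) volume a d) :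
    g a ^ 2 ≤ 2 / (d - c) * (∫ x in c..d, g x ^ 2) +
      2 * Real.log (d / a) * ∫ x in a..d, x * g' x ^ 2 := by
  have hcont : ContinuousOn g (Icc a d) := fun x hx => (hg x hx).continuousAt.continuousWithinAt
  obtain ⟨y, hy, hgy⟩ := exists_sub_mul_le_intervalIntegral hcd.le
    ((hcont.mono (Icc_subset_Icc hac le_rfl)).pow 2)
  have hay : a ≤ y := hac.trans hy.1
  have hg'y : IntervalIntegrable (fun x => x * g' x ^ 2) volume a y :=
    hg'.mono_set <| uIcc_subset_uIcc_left <| by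
      rw [uIcc_of_le (hay.trans hy.2)]; exact ⟨hay, hy.2⟩
  have hmeas : AEStronglyMeasurable g' (volume.restrict (Ioc a y)) := by
    refine (measurable_deriv g).aestronglyMeasurable.congr ?_
    filter_upwards [ae_restrict_mem measurableSet_Ioc] with x hx
    exact (hg x ⟨hx.1.le, hx.2.trans hy.2⟩).deriv
  have hint := IntervalIntegrable.of_mul_sq ha hay hmeas hg'y
  have hftc : ∫ x in a..y, g' x = g y - g a :=
    intervalIntegral.integral_eq_sub_of_hasDerivAt
      (fun x hx => by rw [uIcc_of_le hay] at hx; exact hg x ⟨hx.1, hx.2.trans hy.2⟩) hint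
  have hcs := sq_intervalIntegral_le_log_mul ha hay hint hg'y
  rw [hftc] at hcs
  have hlog : Real.log (y / a) ≤ Real.log (d / a) :=
    Real.log_le_log (div_pos (ha.trans_le hay) ha) (div_le_div_of_nonneg_right hy.2 ha.le)
  have hweight : ∫ x in a..y, x * g' x ^ 2 ≤ ∫ x in a..d, x * g' x ^ 2 := by
    refine intervalIntegral.integral_mono_interval le_rfl hay hy.2 ?_ hg'
    filter_upwards [ae_restrict_mem measurableSet_Ioc] with x hx
    exact mul_nonneg (ha.trans hx.1).le (sq_nonneg _)
  have hgy' : g y ^ 2 ≤ 1 / (d - c) * ∫ x in c..d, g x ^ 2 := by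
    rw [one_div_mul_eq_div, le_div_iff₀ (sub_pos.2 hcd), mul_comm]; exact hgy
  have hlog_nonneg : 0 ≤ Real.log (y / a) := Real.log_nonneg ((one_le_div ha).2 hay)
  have hweight_nonneg : 0 ≤ ∫ x in a..y, x * g' x ^ 2 :=
    intervalIntegral.integral_nonneg hay fun x hx => mul_nonneg (ha.le.trans hx.1) (sq_nonneg _)
  calc g a ^ 2 ≤ 2 * g y ^ 2 + 2 * (g y - g a) ^ 2 := by nlinarith [sq_nonneg (2 * g y - g a)]
    _ ≤ 2 / (d - c) * (∫ x in c..d, g x ^ 2) +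
        2 * Real.log (d / a) * ∫ x in a..d, x * g' x ^ 2 := by
      have := mul_le_mul hlog hweight hweight_nonneg (hlog_nonneg.trans hlog)
      rw [div_eq_mul_one_div 2]
      nlinarith

theorem log_div_le_two_mul_abs_log {δ ε : ℝ} (hδ : 0 < δ) (hε : 0 < ε) (hεδ : ε ≤ δ⁻¹) :
    Real.log (δ / ε) ≤ 2 * |Real.log ε| := by
  have : Real.log δ ≤ -Real.log ε := by
    rw [← Real.log_inv]; exact Real.log_le_log hδ ((le_inv_comm₀ hε hδ).1 hεδ)
  rw [Real.log_div hδ.ne' hε.ne']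
  linarith [neg_le_abs (Real.log ε)]

/-- 1D logarithmic trace estimate: for `g ∈ H¹((ε,δ))` (encoded via a derivative `g'`
with the relevant integrability), and `ε` small enough,
`|g(ε)|² ≤ C |log ε| (∫_ε^δ x |g'|² dx + ∫_{δ/2}^δ |g|² dx)` with `C` depending only on `δ`. -/
theorem one_dim_log_trace_estimate (δ : ℝ) (hδ : 0 < δ) :
    ∃ C > 0, ∃ ε₀ > 0, ∀ ε : ℝ, 0 < ε → ε < ε₀ →
      ∀ g g' : ℝ → ℝ,
        (∀ x ∈ Set.Icc ε δ, HasDerivAt g (g' x) x) →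
        IntervalIntegrable (fun x => x * (g' x) ^ 2) volume ε δ →
        IntervalIntegrable (fun x => (g x) ^ 2) volume (δ / 2) δ →
        (g ε) ^ 2 ≤ C * |Real.log ε| *
          ((∫ x in ε..δ, x * (g' x) ^ 2) + ∫ x in (δ / 2)..δ, (g x) ^ 2) := by
  refine ⟨4 + 4 / δ, by positivity, min (δ / 2) (min (Real.exp (-1)) δ⁻¹), by positivity,
    fun ε hε hε₀ g g' hg hg' _ => ?_⟩
  simp only [lt_min_iff] at hε₀
  obtain ⟨hεδ, hεe, hεδ'⟩ := hε₀
  have htrace := sq_le_integral_sq_add_log_mul_integral_mul_sq_deriv hε hεδ.le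
    (half_lt_self hδ) hg hg'
  have hlog_one : 1 ≤ |Real.log ε| := by
    have : Real.log ε < -1 := by simpa using Real.log_lt_log hε hεe
    linarith [neg_le_abs (Real.log ε)]
  have hlog := log_div_le_two_mul_abs_log hδ hε hεδ'.le
  have hA : 0 ≤ ∫ x in ε..δ, x * g' x ^ 2 := intervalIntegral.integral_nonneg (by linarith)
    fun x hx => mul_nonneg (hε.le.trans hx.1) (sq_nonneg _)
  have hB : 0 ≤ ∫ x in (δ / 2)..δ, g x ^ 2 := intervalIntegral.integral_nonneg (by linarith)
    fun x _ => sq_nonneg _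
  rw [sub_half, div_div_eq_mul_div] at htrace
  calc g ε ^ 2 ≤ 2 * 2 / δ * (∫ x in (δ / 2)..δ, g x ^ 2) +
        2 * Real.log (δ / ε) * ∫ x in ε..δ, x * g' x ^ 2 := htrace
    _ ≤ 4 / δ * |Real.log ε| * (∫ x in (δ / 2)..δ, g x ^ 2) +
        4 * |Real.log ε| * ∫ x in ε..δ, x * g' x ^ 2 := by
      have hcoeff : 2 * 2 / δ ≤ 4 / δ * |Real.log ε| :=
        (by norm_num : (2 : ℝ) * 2 / δ = 4 / δ).le.trans
          (le_mul_of_one_le_right (by positivity) hlog_one)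
      exact add_le_add (mul_le_mul_of_nonneg_right hcoeff hB)
        (mul_le_mul_of_nonneg_right (by linarith) hA)
    _ ≤ (4 + 4 / δ) * |Real.log ε| *
          ((∫ x in ε..δ, x * g' x ^ 2) + ∫ x in (δ / 2)..δ, g x ^ 2) := by
      have habs : 0 ≤ |Real.log ε| := abs_nonneg _
      have hδinv : 0 ≤ 4 / δ := by positivity
      nlinarith [mul_nonneg (mul_nonneg hδinv habs) hA, mul_nonneg habs hB]
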